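/- arXiv:2401.11128 — 3 statements merged into one kernel-verified Lean document; each statement's English description precedes it below -/
import Mathlib

section
/- For every c ∈ ℂ and λ > 0, the function β ↦ (1/2)|β − c|² + λ|β| on ℂ has a unique global minimizer, and this minimizer equals S_λ(c) = (|c| − λ)₊ · c/|c| (with S_λ(0) = 0). -/
/-!
The objective `f(β) = ½‖β - c‖² + λ‖β‖` is the sum of a 1-strongly convex quadratic and a
convex function, so a point `s` at which `c - s` is a subgradient of `λ‖·‖` (that is,
`‖c - s‖ ≤ λ` and `⟪c - s, s⟫ = λ‖s‖`) satisfies `f(s) + ½‖β - s‖² ≤ f(β)` for every `β`,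
which makes it the unique minimiser. The soft threshold `S_λ(c)` is such a point: it is `0`
when `‖c‖ ≤ λ`, and otherwise `c - S_λ(c) = (λ / ‖c‖) • c` has norm `λ` and points along
`S_λ(c)`.
-/

/-- The complex soft-threshold operator `S_λ(z) = (|z| − λ)₊ · z/|z|`, `S_λ(0) = 0`. -/
noncomputable def softC (lam : ℝ) (z : ℂ) : ℂ :=
  if z = 0 then 0 else (max (‖z‖ - lam) 0 / ‖z‖ : ℝ) • z

open scoped RealInnerProductSpace

theorem half_sq_norm_sub_add_mul_norm_add_le_of_subgradient {E : Type*}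
    [NormedAddCommGroup E] [InnerProductSpace ℝ E] {c s : E} {lam : ℝ}
    (hnorm : ‖c - s‖ ≤ lam) (hinner : ⟪c - s, s⟫ = lam * ‖s‖) (β : E) :
    (1 / 2) * ‖s - c‖ ^ 2 + lam * ‖s‖ + (1 / 2) * ‖β - s‖ ^ 2
      ≤ (1 / 2) * ‖β - c‖ ^ 2 + lam * ‖β‖ := by
  have hexpand : ‖β - c‖ ^ 2 = ‖β - s‖ ^ 2 - 2 * ⟪c - s, β - s⟫ + ‖s - c‖ ^ 2 := by
    rw [show β - c = (β - s) - (c - s) by abel, norm_sub_sq_real, real_inner_comm,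
      norm_sub_rev c s]
  have hcs : ⟪c - s, β⟫ ≤ lam * ‖β‖ :=
    (real_inner_le_norm _ _).trans (mul_le_mul_of_nonneg_right hnorm (norm_nonneg β))
  rw [hexpand, inner_sub_right, hinner]
  linarith

theorem softC_of_norm_le {lam : ℝ} {c : ℂ} (h : ‖c‖ ≤ lam) : softC lam c = 0 := by
  rw [softC, max_eq_right (by linarith), zero_div, zero_smul, ite_self]

theorem softC_of_lt_norm {lam : ℝ} {c : ℂ} (h : lam < ‖c‖) :
    softC lam c = ((‖c‖ - lam) / ‖c‖) • c := by
  rw [softC, max_eq_left (sub_nonneg.mpr h.le)]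
  split_ifs with hc
  · rw [hc, smul_zero]
  · rfl

theorem sub_softC_of_lt_norm {lam : ℝ} {c : ℂ} (h : lam < ‖c‖) :
    c - softC lam c = (lam / ‖c‖) • c := by
  rcases eq_or_ne c 0 with rfl | hc
  · simp [softC]
  · have ha : ‖c‖ ≠ 0 := norm_ne_zero_iff.mpr hc
    rw [softC_of_lt_norm h]
    nth_rewrite 1 [← one_smul ℝ c]
    rw [← sub_smul]
    congr 1
    field_simp
    ring

theorem norm_sub_softC_le {lam : ℝ} (hlam : 0 ≤ lam) (c : ℂ) : ‖c - softC lam c‖ ≤ lam := by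
  rcases le_or_gt ‖c‖ lam with h | h
  · rwa [softC_of_norm_le h, sub_zero]
  · have ha : 0 < ‖c‖ := hlam.trans_lt h
    rw [sub_softC_of_lt_norm h, norm_smul, Real.norm_of_nonneg (by positivity),
      div_mul_cancel₀ lam ha.ne']

theorem inner_sub_softC_softC (lam : ℝ) (c : ℂ) :
    ⟪c - softC lam c, softC lam c⟫ = lam * ‖softC lam c‖ := by
  rcases le_or_gt ‖c‖ lam with h | h
  · simp [softC_of_norm_le h]
  · rcases eq_or_ne c 0 with rfl | hc
    · simp [softC_of_lt_norm h]
    have ha : 0 < ‖c‖ := norm_pos_iff.mpr hc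
    rw [sub_softC_of_lt_norm h, softC_of_lt_norm h, real_inner_smul_left, real_inner_smul_right,
      real_inner_self_eq_norm_sq, norm_smul, Real.norm_of_nonneg (div_nonneg (by linarith) ha.le)]
    field_simp

/-- For every `c ∈ ℂ` and `λ > 0`, the function `β ↦ (1/2)|β − c|² + λ|β|` on `ℂ` has a
unique global minimizer, which equals `S_λ(c)`. -/
theorem stmt13 (c : ℂ) (lam : ℝ) (hlam : 0 < lam) :
    ∀ β : ℂ, β ≠ softC lam c →
      (1 / 2) * ‖softC lam c - c‖ ^ 2 + lam * ‖softC lam c‖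
        < (1 / 2) * ‖β - c‖ ^ 2 + lam * ‖β‖ := by
  intro β hβ
  have hgrowth := half_sq_norm_sub_add_mul_norm_add_le_of_subgradient
    (norm_sub_softC_le hlam.le c) (inner_sub_softC_softC lam c) β
  have hdist : 0 < ‖β - softC lam c‖ := norm_pos_iff.mpr (sub_ne_zero.mpr hβ)
  nlinarith
end

section
/- Let n ≥ 1, x ∈ ℂⁿ with ‖x‖₂² = n, r ∈ ℂⁿ, and λ > 0. Then the single-coordinate complex Lasso objective β ↦ (1/(2n))‖r − xβ‖₂² + λ|β| on ℂ has the unique global minimizer β̂ = S_λ(x†r / n), where x†r = Σᵢ conj(xᵢ) rᵢ. (This is the closed-form block coordinate descent update of the complex Lasso.) -/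
/-- The single-coordinate complex Lasso objective
`β ↦ (1/(2n)) ‖r − x β‖₂² + λ |β|`. -/
noncomputable def coordLassoObj (n : ℕ) (x r : Fin n → ℂ) (lam : ℝ) (β : ℂ) : ℝ :=
  (1 / (2 * (n : ℝ))) * ∑ i, ‖r i - x i * β‖ ^ 2 + lam * ‖β‖

/-!
With `z = x†r / n`, completing the square and using `‖x‖₂² = n` turn the objective into
`½ |β - z|² + λ |β|` plus a constant, i.e. the proximal objective of `λ |·|` at `z`.
The point `b = S_λ(z)` satisfies `|z - b| ≤ λ` and `Re ⟪b, z - b⟫ = λ |b|` (that is, `z - b` is a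
subgradient of `λ |·|` at `b`), and for such `b` Cauchy–Schwarz gives
`½ |β - z|² + λ |β| ≥ ½ |b - z|² + λ |b| + ½ |β - b|²`.
-/

open ComplexConjugate RealInnerProductSpace

theorem half_norm_sub_sq_add_mul_norm_lt {E : Type*} [NormedAddCommGroup E]
    [InnerProductSpace ℝ E] {lam : ℝ} {z b β : E} (hdist : ‖z - b‖ ≤ lam)
    (hinner : ⟪b, z - b⟫ = lam * ‖b‖) (hβ : β ≠ b) :
    1 / 2 * ‖b - z‖ ^ 2 + lam * ‖b‖ < 1 / 2 * ‖β - z‖ ^ 2 + lam * ‖β‖ := by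
  have hexpand : ‖β - z‖ ^ 2 = ‖β - b‖ ^ 2 - 2 * ⟪β - b, z - b⟫ + ‖z - b‖ ^ 2 := by
    rw [← norm_sub_sq_real, sub_sub_sub_cancel_right]
  have hcs : ⟪β, z - b⟫ ≤ lam * ‖β‖ := by
    rw [mul_comm]
    exact (real_inner_le_norm _ _).trans (mul_le_mul_of_nonneg_left hdist (norm_nonneg β))
  have hpos : 0 < ‖β - b‖ ^ 2 := pow_pos (norm_pos_iff.mpr (sub_ne_zero.mpr hβ)) 2
  rw [hexpand, norm_sub_rev b z, inner_sub_left, hinner]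
  linarith

theorem softC_eq_smul (lam : ℝ) (z : ℂ) : softC lam z = (max (‖z‖ - lam) 0 / ‖z‖) • z := by
  by_cases hz : z = 0 <;> simp [softC, hz]

theorem softC_optimality {lam : ℝ} (hlam : 0 ≤ lam) (z : ℂ) :
    ‖z - softC lam z‖ ≤ lam ∧ ⟪softC lam z, z - softC lam z⟫ = lam * ‖softC lam z‖ := by
  rw [softC_eq_smul]
  rcases le_or_gt ‖z‖ lam with hle | hgt
  · simp [hle]
  · have hz : 0 < ‖z‖ := hlam.trans_lt hgt
    have hres : z - ((‖z‖ - lam) / ‖z‖) • z = (lam / ‖z‖) • z := by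
      rw [show lam / ‖z‖ = 1 - (‖z‖ - lam) / ‖z‖ by field_simp; ring, sub_smul, one_smul]
    rw [max_eq_left (sub_nonneg.mpr hgt.le), hres, real_inner_smul_left, real_inner_smul_right,
      real_inner_self_eq_norm_sq, norm_smul, norm_smul, Real.norm_of_nonneg (by positivity),
      Real.norm_of_nonneg (div_nonneg (sub_nonneg.mpr hgt.le) hz.le)]
    exact ⟨(div_mul_cancel₀ lam hz.ne').le, by field_simp⟩

theorem sum_norm_sub_mul_sq {ι : Type*} [Fintype ι] (x r : ι → ℂ) (γ : ℂ) :
    ∑ i, ‖r i - x i * γ‖ ^ 2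
      = ∑ i, ‖r i‖ ^ 2 - 2 * ⟪γ, ∑ i, conj (x i) * r i⟫ + (∑ i, ‖x i‖ ^ 2) * ‖γ‖ ^ 2 := by
  have hterm : ∀ i, ‖r i - x i * γ‖ ^ 2
      = ‖r i‖ ^ 2 - 2 * ⟪γ, conj (x i) * r i⟫ + ‖x i‖ ^ 2 * ‖γ‖ ^ 2 := by
    intro i
    simp only [Complex.sq_norm, Complex.normSq_apply, Complex.inner, Complex.sub_re,
      Complex.sub_im, Complex.mul_re, Complex.mul_im, Complex.conj_re, Complex.conj_im]
    ring
  simp only [hterm, Finset.sum_add_distrib, Finset.sum_sub_distrib, ← Finset.mul_sum,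
    ← Finset.sum_mul, inner_sum]

theorem coordLassoObj_eq {n : ℕ} (hn : n ≠ 0) {x : Fin n → ℂ} (hx : ∑ i, ‖x i‖ ^ 2 = (n : ℝ))
    (r : Fin n → ℂ) (lam : ℝ) (γ : ℂ) :
    coordLassoObj n x r lam γ
      = 1 / 2 * ‖γ - (∑ i, conj (x i) * r i) / n‖ ^ 2 + lam * ‖γ‖
        + (1 / (2 * n) * ∑ i, ‖r i‖ ^ 2 - 1 / 2 * ‖(∑ i, conj (x i) * r i) / n‖ ^ 2) := by
  set z := (∑ i, conj (x i) * r i) / n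
  have hsum : ∑ i, conj (x i) * r i = (n : ℝ) • z := by
    rw [Complex.real_smul, Complex.ofReal_natCast, mul_div_cancel₀ _ (Nat.cast_ne_zero.mpr hn)]
  rw [coordLassoObj, sum_norm_sub_mul_sq, hx, hsum, real_inner_smul_right, norm_sub_sq_real]
  field_simp
  ring

/-- Let `x ∈ ℂⁿ` with `‖x‖₂² = n`, `r ∈ ℂⁿ`, `λ > 0`. The single-coordinate complex
Lasso objective has the unique global minimizer `β̂ = S_λ(x†r/n)`: this is the
closed-form block coordinate descent update of the complex Lasso. -/
theorem stmt14 (n : ℕ) (hn : 1 ≤ n) (x r : Fin n → ℂ)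
    (hx : ∑ i, ‖x i‖ ^ 2 = (n : ℝ)) (lam : ℝ) (hlam : 0 < lam) :
    ∀ β : ℂ, β ≠ softC lam ((∑ i, starRingEnd ℂ (x i) * r i) / (n : ℂ)) →
      coordLassoObj n x r lam (softC lam ((∑ i, starRingEnd ℂ (x i) * r i) / (n : ℂ)))
        < coordLassoObj n x r lam β := by
  intro β hβ
  obtain ⟨hdist, hinner⟩ := softC_optimality hlam.le ((∑ i, conj (x i) * r i) / n)
  rw [coordLassoObj_eq (by omega) hx, coordLassoObj_eq (by omega) hx]
  linarith [half_norm_sub_sq_add_mul_norm_lt hdist hinner hβ]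
end

section
/- Let Θ* be a p×p Hermitian positive definite complex matrix, set κ_f = ‖(Θ*)⁻¹‖_∞ (maximum over rows of the sum of moduli of entries), and let d ≥ 1. Let G be a p×p Hermitian complex matrix such that each row of G has at most d nonzero entries and ‖G‖_max ≤ 1/(3 κ_f d). Then Θ* + G is invertible, and the remainder R(G) = (Θ* + G)⁻¹ − (Θ*)⁻¹ + (Θ*)⁻¹ G (Θ*)⁻¹ of the first-order Taylor expansion of the matrix inverse satisfies ‖R(G)‖_max ≤ (3/2) d ‖G‖_max² κ_f³. -/
open Matrix ComplexOrder

open scoped Matrix.Norms.Operator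

/-! With `N = Θ⁻¹ G`, sparsity gives `‖G‖_∞ ≤ d ‖G‖_max`, hence `‖N‖_∞ ≤ 1/3`. So
`Θ + G = Θ (1 + N)` is invertible, and `(Θ + G)⁻¹ = Θ⁻¹ - N (Θ + G)⁻¹` gives
`‖(Θ + G)⁻¹‖_∞ ≤ (3/2) κ_f`. Applying `A⁻¹ - B⁻¹ = A⁻¹ (B - A) B⁻¹` twice writes the
remainder as `(Θ⁻¹ G (Θ + G)⁻¹) (G Θ⁻¹)`. The `(k, l)` entry of this product is at most the
`k`-th row sum of the first factor, `≤ κ_f · d ‖G‖_max · (3/2) κ_f`, times the largest entry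
of the `l`-th column of `G Θ⁻¹`, which is `≤ ‖G‖_max κ_f` because the column sums of the
Hermitian matrix `Θ⁻¹` are its row sums. -/

namespace Matrix

variable {α : Type*} {l m n : Type*}

theorem linfty_opNorm_le_iff [Fintype m] [Fintype n] [SeminormedAddCommGroup α]
    {A : Matrix m n α} {c : ℝ} (hc : 0 ≤ c) : ‖A‖ ≤ c ↔ ∀ i, ∑ j, ‖A i j‖ ≤ c := by
  lift c to NNReal using hc
  simp only [← coe_nnnorm, NNReal.coe_le_coe, ← NNReal.coe_sum, linfty_opNNNorm_def,
    Finset.sup_le_iff, Finset.mem_univ, true_implies]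

theorem linfty_opNorm_eq_of_isGreatest [Fintype m] [Fintype n] [SeminormedAddCommGroup α]
    {A : Matrix m n α} {c : ℝ} (h : IsGreatest {r : ℝ | ∃ i, r = ∑ j, ‖A i j‖} c) : ‖A‖ = c := by
  obtain ⟨i, rfl⟩ := h.1
  refine le_antisymm ((linfty_opNorm_le_iff (by positivity)).2 fun k => h.2 ⟨k, rfl⟩) ?_
  exact (linfty_opNorm_le_iff (norm_nonneg A)).1 le_rfl i

theorem linfty_opNorm_le_of_card_ne_zero_le [Fintype m] [Fintype n] [SeminormedAddCommGroup α]
    [DecidableEq α] {A : Matrix m n α} {d : ℕ} {g : ℝ} (hg : 0 ≤ g)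
    (hrow : ∀ i, (Finset.univ.filter fun j => A i j ≠ 0).card ≤ d)
    (hA : ∀ i j, ‖A i j‖ ≤ g) : ‖A‖ ≤ d * g := by
  refine (linfty_opNorm_le_iff (by positivity)).2 fun i => ?_
  calc ∑ j, ‖A i j‖ = ∑ j with A i j ≠ 0, ‖A i j‖ :=
        (Finset.sum_subset (Finset.filter_subset _ _) fun j _ hj => by simp_all).symm
    _ ≤ (Finset.univ.filter fun j => A i j ≠ 0).card • g :=
        Finset.sum_le_card_nsmul _ _ _ fun j _ => hA i j
    _ ≤ d * g := by rw [nsmul_eq_mul]; gcongr; exact_mod_cast hrow i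

theorem norm_mul_apply_le_linfty_opNorm_mul [Fintype l] [Fintype m] [NonUnitalSeminormedRing α]
    (A : Matrix l m α) (B : Matrix m n α) (i : l) {k : n} {c : ℝ} (hc : 0 ≤ c)
    (hB : ∀ j, ‖B j k‖ ≤ c) : ‖(A * B) i k‖ ≤ ‖A‖ * c :=
  calc ‖(A * B) i k‖ ≤ ∑ j, ‖A i j‖ * ‖B j k‖ := by
        rw [mul_apply]; exact norm_sum_le_of_le _ fun j _ => norm_mul_le _ _
    _ ≤ ∑ j, ‖A i j‖ * c := by gcongr with j; exact hB j
    _ = (∑ j, ‖A i j‖) * c := (Finset.sum_mul ..).symm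
    _ ≤ ‖A‖ * c := by gcongr; exact (linfty_opNorm_le_iff (norm_nonneg A)).1 le_rfl i

theorem norm_mul_apply_le_mul_linfty_opNorm_conjTranspose [Fintype m] [Fintype n]
    [NonUnitalNormedRing α] [StarRing α] [NormedStarGroup α] (A : Matrix l m α)
    (B : Matrix m n α) {i : l} (k : n) {c : ℝ} (hc : 0 ≤ c) (hA : ∀ j, ‖A i j‖ ≤ c) : ‖(A * B) i k‖ ≤ c * ‖Bᴴ‖ := by
  rw [← norm_star, ← conjTranspose_apply, conjTranspose_mul, mul_comm]
  refine norm_mul_apply_le_linfty_opNorm_mul _ _ k hc fun j => ?_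
  rw [conjTranspose_apply, norm_star]
  exact hA j

variable [Fintype n] [DecidableEq n]

theorem inv_sub_inv_add [CommRing α] {A G : Matrix n n α} (hA : IsUnit A)
    (hAG : IsUnit (A + G)) : A⁻¹ - (A + G)⁻¹ = A⁻¹ * G * (A + G)⁻¹ := by
  rw [inv_sub_inv (iff_of_true hA hAG), add_sub_cancel_left]

theorem inv_add_sub_inv_add_inv_mul_mul_inv [CommRing α] {A G : Matrix n n α}
    (hA : IsUnit A) (hAG : IsUnit (A + G)) :
    (A + G)⁻¹ - A⁻¹ + A⁻¹ * G * A⁻¹ = A⁻¹ * G * (A + G)⁻¹ * (G * A⁻¹) := by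
  have h : (A + G)⁻¹ - A⁻¹ = -((A + G)⁻¹ * G * A⁻¹) := by
    rw [inv_sub_inv (iff_of_true hAG hA), sub_add_cancel_left, Matrix.mul_neg, Matrix.neg_mul]
  calc (A + G)⁻¹ - A⁻¹ + A⁻¹ * G * A⁻¹ = (A⁻¹ - (A + G)⁻¹) * G * A⁻¹ := by
        rw [h, Matrix.sub_mul, Matrix.sub_mul]; abel
    _ = _ := by rw [inv_sub_inv_add hA hAG, Matrix.mul_assoc _ G]

theorem norm_inv_add_mul_le [NormedCommRing α] {A G : Matrix n n α}
    (hA : IsUnit A) (hAG : IsUnit (A + G)) : ‖(A + G)⁻¹‖ * (1 - ‖A⁻¹ * G‖) ≤ ‖A⁻¹‖ := by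
  have h : ‖(A + G)⁻¹‖ ≤ ‖A⁻¹‖ + ‖A⁻¹ * G‖ * ‖(A + G)⁻¹‖ :=
    calc ‖(A + G)⁻¹‖ = ‖A⁻¹ - A⁻¹ * G * (A + G)⁻¹‖ := by
          rw [← inv_sub_inv_add hA hAG, sub_sub_cancel]
      _ ≤ ‖A⁻¹‖ + ‖A⁻¹ * G * (A + G)⁻¹‖ := norm_sub_le _ _
      _ ≤ ‖A⁻¹‖ + ‖A⁻¹ * G‖ * ‖(A + G)⁻¹‖ := by gcongr; exact norm_mul_le _ _
  linarith

theorem isUnit_add_of_norm_inv_mul_lt_one {𝕜 : Type*} [RCLike 𝕜] {A G : Matrix n n 𝕜}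
    (hA : IsUnit A) (h : ‖A⁻¹ * G‖ < 1) : IsUnit (A + G) := by
  have h₁ : IsUnit (1 - -(A⁻¹ * G)) := isUnit_one_sub_of_norm_lt_one (by rwa [norm_neg])
  rw [sub_neg_eq_add] at h₁
  have h₂ : A * (1 + A⁻¹ * G) = A + G := by
    rw [Matrix.mul_add, Matrix.mul_one, ← Matrix.mul_assoc, mul_nonsing_inv _
      ((isUnit_iff_isUnit_det A).1 hA), Matrix.one_mul]
  exact h₂ ▸ hA.mul h₁

end Matrix

theorem stmt18_general (p d : ℕ)
    (Θs : Matrix (Fin p) (Fin p) ℂ) (hΘs : Θs.PosDef)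
    (κf : ℝ)
    (hκf : IsGreatest {r : ℝ | ∃ k : Fin p, r = ∑ l, ‖Θs⁻¹ k l‖} κf)
    (G : Matrix (Fin p) (Fin p) ℂ)
    (hGrow : ∀ k : Fin p, (Finset.univ.filter fun l => G k l ≠ 0).card ≤ d)
    (gmax : ℝ)
    (hgmax : IsGreatest {r : ℝ | ∃ k l : Fin p, r = ‖G k l‖} gmax)
    (hGsmall : gmax ≤ 1 / (3 * κf * (d : ℝ))) :
    IsUnit (Θs + G) ∧
    ∀ k l, ‖((Θs + G)⁻¹ - Θs⁻¹ + Θs⁻¹ * G * Θs⁻¹) k l‖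
      ≤ (3 / 2) * (d : ℝ) * gmax ^ 2 * κf ^ 3 := by
  have hκ : ‖Θs⁻¹‖ = κf := linfty_opNorm_eq_of_isGreatest hκf
  have hκ0 : 0 ≤ κf := hκ ▸ norm_nonneg _
  have hG : ∀ k l, ‖G k l‖ ≤ gmax := fun k l => hgmax.2 ⟨k, l, rfl⟩
  have hg : 0 ≤ gmax := by obtain ⟨k, l, rfl⟩ := hgmax.1; exact norm_nonneg _
  have hGnorm : ‖G‖ ≤ d * gmax := linfty_opNorm_le_of_card_ne_zero_le hg hGrow hG
  have hN : ‖Θs⁻¹ * G‖ ≤ 1 / 3 := calc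
    ‖Θs⁻¹ * G‖ ≤ κf * (d * gmax) := hκ ▸ norm_mul_le_of_le le_rfl hGnorm
    _ = gmax * (3 * κf * d) / 3 := by ring
    _ ≤ 1 / 3 := by
      gcongr
      exact mul_le_of_le_div₀ zero_le_one (by positivity) hGsmall
  have hA := hΘs.isUnit
  have hAG := isUnit_add_of_norm_inv_mul_lt_one hA (hN.trans_lt (by norm_num))
  have hB : ‖(Θs + G)⁻¹‖ ≤ 3 / 2 * κf := calc
    ‖(Θs + G)⁻¹‖ = 3 / 2 * (‖(Θs + G)⁻¹‖ * (2 / 3)) := by ring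
    _ ≤ 3 / 2 * (‖(Θs + G)⁻¹‖ * (1 - ‖Θs⁻¹ * G‖)) := by gcongr; linarith
    _ ≤ 3 / 2 * κf := by gcongr; exact hκ ▸ norm_inv_add_mul_le hA hAG
  refine ⟨hAG, fun k l => ?_⟩
  have hGA : ∀ j, ‖(G * Θs⁻¹) j l‖ ≤ gmax * κf := fun j => by
    simpa only [hΘs.isHermitian.inv.eq, hκ] using
      norm_mul_apply_le_mul_linfty_opNorm_conjTranspose G Θs⁻¹ l hg (hG j)
  rw [inv_add_sub_inv_add_inv_mul_mul_inv hA hAG]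
  calc _ ≤ ‖Θs⁻¹ * G * (Θs + G)⁻¹‖ * (gmax * κf) :=
        norm_mul_apply_le_linfty_opNorm_mul _ _ _ (by positivity) hGA
    _ ≤ κf * (d * gmax) * (3 / 2 * κf) * (gmax * κf) := by
        gcongr
        exact norm_mul_le_of_le (hκ ▸ norm_mul_le_of_le le_rfl hGnorm) hB
    _ = 3 / 2 * d * gmax ^ 2 * κf ^ 3 := by ring

/-- Control of the remainder of the first-order Taylor expansion of the matrix inverse.
`Θ*` is Hermitian positive definite, `κ_f = ‖(Θ*)⁻¹‖_∞` (the maximum absolute row sum of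
the inverse), and `G` is a Hermitian perturbation with at most `d` nonzero entries per
row and `‖G‖_max ≤ 1/(3 κ_f d)`. Then `Θ* + G` is invertible and the Taylor remainder
`R(G) = (Θ*+G)⁻¹ − (Θ*)⁻¹ + (Θ*)⁻¹ G (Θ*)⁻¹` satisfies
`‖R(G)‖_max ≤ (3/2) d ‖G‖_max² κ_f³`. -/
theorem stmt18 (p d : ℕ) (hp : 0 < p) (hd : 1 ≤ d)
    (Θs : Matrix (Fin p) (Fin p) ℂ) (hΘs : Θs.PosDef)
    (κf : ℝ)
    (hκf : IsGreatest {r : ℝ | ∃ k : Fin p, r = ∑ l, ‖Θs⁻¹ k l‖} κf)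
    (G : Matrix (Fin p) (Fin p) ℂ) (hG : G.IsHermitian)
    (hGrow : ∀ k : Fin p, (Finset.univ.filter fun l => G k l ≠ 0).card ≤ d)
    (gmax : ℝ)
    (hgmax : IsGreatest {r : ℝ | ∃ k l : Fin p, r = ‖G k l‖} gmax)
    (hGsmall : gmax ≤ 1 / (3 * κf * (d : ℝ))) :
    IsUnit (Θs + G) ∧
    ∀ k l, ‖((Θs + G)⁻¹ - Θs⁻¹ + Θs⁻¹ * G * Θs⁻¹) k l‖
      ≤ (3 / 2) * (d : ℝ) * gmax ^ 2 * κf ^ 3 :=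
  stmt18_general p d Θs hΘs κf hκf G hGrow gmax hgmax hGsmall
end
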